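/- arXiv:0811.3043 — 3 statements merged into one kernel-verified Lean document; each statement's English description precedes it below -/
import Mathlib

section
/- Let B_{p,q}(z) = z·((z-p)/(1-p̄z))·((z-q)/(1-q̄z)) with |p| > 1, |q| < 1. If B_{p,q} has no critical points on the unit circle, then the restriction of B_{p,q} to the unit circle is an orientation-preserving homeomorphism of the unit circle onto itself. -/
open Complex

noncomputable section BlaschkeAuxSection
namespace BlaschkeAux
open Real


def u (α : ℝ) : ℂ := Complex.exp (Complex.I * α)

lemma abs_u (α : ℝ) : ‖u α‖ = 1 := by
  simp [u, Complex.norm_exp]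

lemma u_ne (α : ℝ) : u α ≠ 0 := Complex.exp_ne_zero _

lemma hasDerivAt_u (α : ℝ) : HasDerivAt u (Complex.I * u α) α := by
  have h1 : HasDerivAt (fun α : ℝ => (α : ℂ)) 1 α := Complex.ofRealCLM.hasDerivAt
  have h2 : HasDerivAt (fun α : ℝ => Complex.I * (α : ℂ)) (Complex.I) α := by
    simpa using h1.const_mul Complex.I
  show HasDerivAt (fun α : ℝ => Complex.exp (Complex.I * α)) _ α
  simpa [u, mul_comm] using h2.cexp

lemma sub_ne {w : ℂ} (hw : ‖w‖ ≠ 1) {z : ℂ} (hz : ‖z‖ = 1) :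
    z - w ≠ 0 := by
  intro h
  rw [sub_eq_zero] at h
  exact hw (by rw [← h, hz])

/-- denominator identity on the circle -/
lemma denom_eq {w z : ℂ} (hz : ‖z‖ = 1) :
    1 - (starRingEnd ℂ) w * z = z * (starRingEnd ℂ) (z - w) := by
  have hz2 : z * (starRingEnd ℂ) z = 1 := by
    rw [Complex.mul_conj]
    norm_cast
    simp [Complex.normSq_eq_norm_sq, hz]
  calc 1 - (starRingEnd ℂ) w * z = z * (starRingEnd ℂ) z - (starRingEnd ℂ) w * z := by rw [hz2]
  _ = z * (starRingEnd ℂ) (z - w) := by rw [map_sub]; ring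

lemma denom_ne {w z : ℂ} (hw : ‖w‖ ≠ 1) (hz : ‖z‖ = 1) :
    1 - (starRingEnd ℂ) w * z ≠ 0 := by
  rw [denom_eq hz]
  refine mul_ne_zero (fun h => by simp [h] at hz) ?_
  simpa only [ne_eq, map_eq_zero] using sub_ne hw hz

lemma abs_ratio {w z : ℂ} (hw : ‖w‖ ≠ 1) (hz : ‖z‖ = 1) :
    ‖(z - w) / (1 - (starRingEnd ℂ) w * z)‖ = 1 := by
  rw [denom_eq hz, norm_div, norm_mul, hz, Complex.norm_conj, one_mul,
    div_self (by simpa only [ne_eq, norm_eq_zero] using sub_ne hw hz)]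

variable {w : ℂ}

def Fw (w : ℂ) (α : ℝ) : ℂ := ∫ t in (0:ℝ)..α, Complex.I * u t / (u t - w)

lemma continuous_u : Continuous u :=
  Complex.continuous_exp.comp (continuous_const.mul Complex.continuous_ofReal)

lemma cont_integrand (hw : ‖w‖ ≠ 1) :
    Continuous (fun t : ℝ => Complex.I * u t / (u t - w)) :=
  (continuous_const.mul continuous_u).div (continuous_u.sub continuous_const)
    (fun t => sub_ne hw (abs_u t))

lemma hasDerivAt_Fw (hw : ‖w‖ ≠ 1) (α : ℝ) :
    HasDerivAt (Fw w) (Complex.I * u α / (u α - w)) α :=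
  ((cont_integrand hw).integral_hasStrictDerivAt 0 α).hasDerivAt

lemma u_sub_eq (hw : ‖w‖ ≠ 1) (α : ℝ) :
    u α - w = (1 - w) * Complex.exp (Fw w α) := by
  set g : ℝ → ℂ := fun α => (u α - w) * Complex.exp (-Fw w α) with hgdef
  have hg : ∀ β : ℝ, HasDerivAt g 0 β := by
    intro β
    have h1 : HasDerivAt (fun α => u α - w) (Complex.I * u β) β :=
      (hasDerivAt_u β).sub_const w
    have h2 : HasDerivAt (fun α => Complex.exp (-Fw w α))
        (Complex.exp (-Fw w β) * -(Complex.I * u β / (u β - w))) β :=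
      ((hasDerivAt_Fw hw β).neg).cexp
    have h3 := h1.mul h2
    have hne := sub_ne hw (abs_u β)
    have heq : Complex.I * u β * Complex.exp (-Fw w β) +
        (u β - w) * (Complex.exp (-Fw w β) * -(Complex.I * u β / (u β - w))) = 0 := by
      field_simp
      ring
    rw [hgdef]
    rw [heq] at h3
    exact h3
  have hconst : ∀ β : ℝ, g β = g 0 :=
    fun β => is_const_of_deriv_eq_zero (fun x => (hg x).differentiableAt)
      (fun x => (hg x).deriv) β 0
  have hF0 : Fw w 0 = 0 := intervalIntegral.integral_same
  have hu0 : u 0 = 1 := by simp [u]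
  have hga : g α = 1 - w := by
    rw [hconst α, hgdef]; simp [hF0, hu0]
  have := hga
  rw [hgdef] at this
  simp only at this
  calc u α - w = (u α - w) * Complex.exp (-Fw w α) * Complex.exp (Fw w α) := by
        rw [mul_assoc, ← Complex.exp_add]; simp
  _ = (1 - w) * Complex.exp (Fw w α) := by rw [this]

lemma u_periodic : Function.Periodic u (2 * π) := by
  intro t
  simp only [u]
  push_cast
  rw [mul_add, Complex.exp_add]
  have : Complex.exp (Complex.I * (2 * π)) = 1 := by
    rw [show Complex.I * (2*π) = 2*π*Complex.I by ring, Complex.exp_two_pi_mul_I]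
  rw [this, mul_one]

lemma slit_small {q v : ℂ} (hq : ‖q‖ < 1) (hv : ‖v‖ = 1) :
    1 - q * v ∈ Complex.slitPlane := by
  rw [sub_eq_add_neg]
  apply Complex.mem_slitPlane_of_norm_lt_one
  rw [norm_neg]
  simp only [norm_mul, hv, mul_one]
  exact hq

lemma ne_small {q v : ℂ} (hq : ‖q‖ < 1) (hv : ‖v‖ = 1) :
    1 - q * v ≠ 0 :=
  Complex.slitPlane_ne_zero (slit_small hq hv)

lemma u_mul_inv (t : ℝ) : u t * Complex.exp (-(Complex.I * t)) = 1 := by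
  rw [u, ← Complex.exp_add]; simp

lemma integral_q {q : ℂ} (hq : ‖q‖ < 1) :
    ∫ t in (0:ℝ)..(2*π), Complex.I * u t / (u t - q) = 2 * π * Complex.I := by
  have hqne : ‖q‖ ≠ 1 := ne_of_lt hq
  have hderiv : ∀ t ∈ Set.uIcc (0:ℝ) (2*π), HasDerivAt
      (fun t : ℝ => Complex.I * t + Complex.log (1 - q * Complex.exp (-(Complex.I * t))))
      (Complex.I * u t / (u t - q)) t := by
    intro t _
    have h1 : HasDerivAt (fun t : ℝ => Complex.I * (t:ℂ)) Complex.I t := by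
      simpa using (Complex.ofRealCLM.hasDerivAt (x := t)).const_mul Complex.I
    have h2 : HasDerivAt (fun t : ℝ => -(Complex.I * (t:ℂ))) (-Complex.I) t := h1.neg
    have h3 : HasDerivAt (fun t : ℝ => Complex.exp (-(Complex.I * t)))
        (Complex.exp (-(Complex.I * t)) * -Complex.I) t := h2.cexp
    have h4 : HasDerivAt (fun t : ℝ => 1 - q * Complex.exp (-(Complex.I * t)))
        (-(q * (Complex.exp (-(Complex.I * t)) * -Complex.I))) t :=
      (h3.const_mul q).const_sub 1
    have habs : ‖Complex.exp (-(Complex.I * t))‖ = 1 := by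
      simp [Complex.norm_exp]
    have hslit := slit_small hq habs
    have h5 := h4.clog_real hslit
    have h6 := h1.add h5
    have key : Complex.I + -(q * (Complex.exp (-(Complex.I * t)) * -Complex.I)) /
        (1 - q * Complex.exp (-(Complex.I * t))) = Complex.I * u t / (u t - q) := by
      have hne1 := ne_small hq habs
      have hne2 := sub_ne hqne (abs_u t)
      have hue := u_mul_inv t
      field_simp
      linear_combination q * hue
    rw [key] at h6
    exact h6
  rw [intervalIntegral.integral_eq_sub_of_hasDerivAt hderiv
    ((cont_integrand hqne).intervalIntegrable 0 (2*π))]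
  have he : Complex.exp (-(Complex.I * (2*(π:ℂ)))) = 1 := by
    rw [show -(Complex.I * (2*(π:ℂ))) = -(2*π*Complex.I) by ring, Complex.exp_neg,
      Complex.exp_two_pi_mul_I, inv_one]
  push_cast
  rw [he]
  simp
  ring

lemma integral_p {p : ℂ} (hp : 1 < ‖p‖) :
    ∫ t in (0:ℝ)..(2*π), Complex.I * u t / (u t - p) = 0 := by
  have hpne : ‖p‖ ≠ 1 := ne_of_gt hp
  have hp0 : p ≠ 0 := fun h => by rw [h, norm_zero] at hp; linarith
  have habsinv : ‖p⁻¹‖ < 1 := by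
    rw [norm_inv]
    exact inv_lt_one_of_one_lt₀ hp
  have hderiv : ∀ t ∈ Set.uIcc (0:ℝ) (2*π), HasDerivAt
      (fun t : ℝ => Complex.log (1 - p⁻¹ * u t))
      (Complex.I * u t / (u t - p)) t := by
    intro t _
    have h1 : HasDerivAt (fun t : ℝ => Complex.I * (t:ℂ)) Complex.I t := by
      simpa using (Complex.ofRealCLM.hasDerivAt (x := t)).const_mul Complex.I
    have h3 : HasDerivAt (fun t : ℝ => u t) (u t * Complex.I) t := by
      simpa [u, mul_comm] using h1.cexp
    have h4 : HasDerivAt (fun t : ℝ => 1 - p⁻¹ * u t) (-(p⁻¹ * (u t * Complex.I))) t :=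
      (h3.const_mul p⁻¹).const_sub 1
    have hslit := slit_small habsinv (abs_u t)
    have h5 := h4.clog_real hslit
    have key : -(p⁻¹ * (u t * Complex.I)) / (1 - p⁻¹ * u t) =
        Complex.I * u t / (u t - p) := by
      have hne1 := ne_small habsinv (abs_u t)
      have hne2 := sub_ne hpne (abs_u t)
      rw [div_eq_div_iff hne1 hne2]
      have hpp : p * p⁻¹ = 1 := mul_inv_cancel₀ hp0
      linear_combination (u t * Complex.I) * hpp
    rw [key] at h5
    exact h5
  rw [intervalIntegral.integral_eq_sub_of_hasDerivAt hderiv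
    ((cont_integrand hpne).intervalIntegrable 0 (2*π))]
  have he : u (2*π) = u 0 := by
    have := u_periodic 0
    simpa using this
  rw [he]
  simp

lemma Fw_add {w : ℂ} (hw : ‖w‖ ≠ 1) (α : ℝ) :
    Fw w (α + 2*π) = Fw w α + ∫ t in (0:ℝ)..(2*π), Complex.I * u t / (u t - w) := by
  have hint : ∀ a b : ℝ, IntervalIntegrable (fun t : ℝ => Complex.I * u t / (u t - w))
      MeasureTheory.volume a b := fun a b => (cont_integrand hw).intervalIntegrable a b
  have hper : Function.Periodic (fun t : ℝ => Complex.I * u t / (u t - w)) (2*π) := by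
    intro t
    simp only [u_periodic t]
  have h1 : Fw w α + ∫ t in α..(α+2*π), Complex.I * u t / (u t - w) = Fw w (α + 2*π) :=
    intervalIntegral.integral_add_adjacent_intervals (hint 0 α) (hint α (α+2*π))
  rw [← h1, hper.intervalIntegral_add_eq α 0]
  simp

lemma ratio_eq {w : ℂ} (hw : ‖w‖ ≠ 1) (α : ℝ) :
    (u α - w) / (1 - (starRingEnd ℂ) w * u α) =
      Complex.exp (Complex.I *
        ((-α + 2*(1-w).arg + 2*(Fw w α).im : ℝ) : ℂ)) := by
  have h1w : (1:ℂ) - w ≠ 0 := sub_ne hw (by simp)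
  set θ : ℝ := (1-w).arg with hθ
  set R : ℂ := (‖1-w‖ : ℂ) with hR
  have hRne : R ≠ 0 := by
    simp only [hR, ne_eq, Complex.ofReal_eq_zero, norm_eq_zero]
    exact h1w
  have h3 : 1 - w = R * Complex.exp (θ * Complex.I) :=
    (Complex.norm_mul_exp_arg_mul_I (1-w)).symm
  have h4 : (starRingEnd ℂ) (1 - w) = R * Complex.exp (-θ * Complex.I) := by
    rw [h3, map_mul, ← Complex.exp_conj]
    congr 1
    · simp [hR]
    · congr 1
      simp only [map_mul, Complex.conj_ofReal, Complex.conj_I]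
      ring
  have hconjF : (starRingEnd ℂ) (u α - w) =
      R * Complex.exp (-θ * Complex.I) * Complex.exp ((starRingEnd ℂ) (Fw w α)) := by
    rw [u_sub_eq hw α, map_mul, ← Complex.exp_conj, h4]
  rw [div_eq_iff (denom_ne hw (abs_u α)), denom_eq (abs_u α), hconjF, u_sub_eq hw α, h3]
  rw [show u α = Complex.exp (Complex.I * α) from rfl]
  have hexp : (θ:ℂ) * Complex.I + Fw w α =
      Complex.I * ((-α + 2*θ + 2*(Fw w α).im : ℝ) : ℂ) +
      (Complex.I * α + (-θ * Complex.I + (starRingEnd ℂ) (Fw w α))) := by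
    have hsub : Fw w α - (starRingEnd ℂ) (Fw w α) = (2 * (Fw w α).im : ℝ) * Complex.I :=
      Complex.sub_conj _
    push_cast at hsub
    push_cast
    linear_combination hsub
  calc R * Complex.exp (↑θ * Complex.I) * Complex.exp (Fw w α)
      = R * Complex.exp ((θ:ℂ) * Complex.I + Fw w α) := by
        rw [Complex.exp_add]; ring
    _ = R * Complex.exp (Complex.I * ((-α + 2*θ + 2*(Fw w α).im : ℝ) : ℂ) +
        (Complex.I * α + (-θ * Complex.I + (starRingEnd ℂ) (Fw w α)))) := by rw [hexp]
    _ = Complex.exp (Complex.I * ((-α + 2*θ + 2*(Fw w α).im : ℝ) : ℂ)) *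
        (Complex.exp (Complex.I * α) * (R * Complex.exp (-θ * Complex.I) *
          Complex.exp ((starRingEnd ℂ) (Fw w α)))) := by
        rw [Complex.exp_add, Complex.exp_add, Complex.exp_add]; ring

def B (p q : ℂ) : ℂ → ℂ := fun z => z * ((z - p) / (1 - (starRingEnd ℂ) p * z)) *
    ((z - q) / (1 - (starRingEnd ℂ) q * z))

def Tl (p q : ℂ) (α : ℝ) : ℝ :=
  -α + (2*(1-p).arg + 2*(Fw p α).im) + (2*(1-q).arg + 2*(Fw q α).im)

lemma B_eq {p q : ℂ} (hp : ‖p‖ ≠ 1) (hq : ‖q‖ ≠ 1) (α : ℝ) :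
    B p q (u α) = Complex.exp (Complex.I * ((Tl p q α : ℝ) : ℂ)) := by
  rw [B]
  rw [ratio_eq hp α, ratio_eq hq α, show u α = Complex.exp (Complex.I * α) from rfl,
    ← Complex.exp_add, ← Complex.exp_add]
  congr 1
  rw [Tl]
  push_cast
  ring

def Dl (p q : ℂ) (α : ℝ) : ℝ :=
  -1 + 2*(Complex.I * u α / (u α - p)).im + 2*(Complex.I * u α / (u α - q)).im

lemma hasDerivAt_im {f : ℝ → ℂ} {f' : ℂ} {x : ℝ} (hf : HasDerivAt f f' x) :
    HasDerivAt (fun t => (f t).im) f'.im x := by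
  have h := (Complex.imCLM.hasFDerivAt.comp_hasDerivAt x hf)
  simp only [Complex.imCLM_apply] at h
  exact h

lemma hasDerivAt_Tl {p q : ℂ} (hp : ‖p‖ ≠ 1) (hq : ‖q‖ ≠ 1) (α : ℝ) :
    HasDerivAt (Tl p q) (Dl p q α) α := by
  have h1 : HasDerivAt (fun α : ℝ => -α) (-1) α := (hasDerivAt_id α).neg
  have h2 : HasDerivAt (fun α => 2*(1-p).arg + 2*(Fw p α).im)
      (2*(Complex.I * u α / (u α - p)).im) α :=
    ((hasDerivAt_im (hasDerivAt_Fw hp α)).const_mul 2).const_add _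
  have h3 : HasDerivAt (fun α => 2*(1-q).arg + 2*(Fw q α).im)
      (2*(Complex.I * u α / (u α - q)).im) α :=
    ((hasDerivAt_im (hasDerivAt_Fw hq α)).const_mul 2).const_add _
  exact (h1.add h2).add h3

lemma continuous_Dl {p q : ℂ} (hp : ‖p‖ ≠ 1) (hq : ‖q‖ ≠ 1) :
    Continuous (Dl p q) := by
  apply Continuous.add
  apply Continuous.add continuous_const
  · exact continuous_const.mul (Complex.continuous_im.comp (cont_integrand hp))
  · exact continuous_const.mul (Complex.continuous_im.comp (cont_integrand hq))

lemma differentiableAt_B {p q : ℂ} (hp : ‖p‖ ≠ 1) (hq : ‖q‖ ≠ 1)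
    {z : ℂ} (hz : ‖z‖ = 1) : DifferentiableAt ℂ (B p q) z := by
  apply DifferentiableAt.mul
  apply DifferentiableAt.mul differentiableAt_fun_id
  · exact ((differentiableAt_fun_id.sub_const p).div
      ((differentiableAt_const _).sub ((differentiableAt_const _).mul differentiableAt_fun_id))
      (denom_ne hp hz))
  · exact ((differentiableAt_fun_id.sub_const q).div
      ((differentiableAt_const _).sub ((differentiableAt_const _).mul differentiableAt_fun_id))
      (denom_ne hq hz))

lemma Dl_ne {p q : ℂ} (hp : ‖p‖ ≠ 1) (hq : ‖q‖ ≠ 1)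
    (hcrit : ∀ z : ℂ, ‖z‖ = 1 → deriv (B p q) z ≠ 0) (α : ℝ) :
    Dl p q α ≠ 0 := by
  have hB : HasDerivAt (B p q) (deriv (B p q) (u α)) (u α) :=
    (differentiableAt_B hp hq (abs_u α)).hasDerivAt
  have h1 : HasDerivAt (fun α => B p q (u α))
      ((Complex.I * u α) • deriv (B p q) (u α)) α := by
    exact
      HasDerivAt.scomp (h := u) (x := α) hB (hasDerivAt_u α)
  have h2 : HasDerivAt (fun α : ℝ => Complex.exp (Complex.I * ((Tl p q α : ℝ) : ℂ)))
      (Complex.exp (Complex.I * ((Tl p q α : ℝ) : ℂ)) * (Complex.I * (Dl p q α : ℂ))) α := by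
    have hT : HasDerivAt (fun α : ℝ => ((Tl p q α : ℝ) : ℂ)) ((Dl p q α : ℂ)) α := by
      exact Complex.ofRealCLM.hasFDerivAt.comp_hasDerivAt α (hasDerivAt_Tl hp hq α)
    exact (hT.const_mul Complex.I).cexp
  have heq : (fun α => B p q (u α)) =
      (fun α : ℝ => Complex.exp (Complex.I * ((Tl p q α : ℝ) : ℂ))) :=
    funext (B_eq hp hq)
  rw [heq] at h1
  have huniq := h1.unique h2
  intro h0
  rw [h0] at huniq
  have huniq' : (Complex.I * u α) * deriv (B p q) (u α) = 0 := by
    rw [smul_eq_mul] at huniq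
    rw [huniq]
    simp
  have : deriv (B p q) (u α) = 0 := by
    have hI : Complex.I * u α ≠ 0 := mul_ne_zero Complex.I_ne_zero (u_ne α)
    exact (mul_eq_zero.mp huniq').resolve_left hI
  exact hcrit (u α) (abs_u α) this

variable {p q : ℂ}

lemma Tl_add (hp : 1 < ‖p‖) (hq : ‖q‖ < 1) (α : ℝ) :
    Tl p q (α + 2*π) = Tl p q α + 2*π := by
  rw [Tl, Tl, Fw_add (ne_of_gt hp) α, Fw_add (ne_of_lt hq) α, integral_p hp, integral_q hq]
  rw [Complex.add_im]
  simp
  ring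

lemma Tl_int (hp : 1 < ‖p‖) (hq : ‖q‖ < 1) (n : ℤ) (α : ℝ) :
    Tl p q (α + n*(2*π)) = Tl p q α + n*(2*π) := by
  have hper : Function.Periodic (fun α => Tl p q α - α) (2*π) := by
    intro x
    simp only
    rw [Tl_add hp hq x]
    ring
  have h := (hper.zsmul n) α
  simp only [zsmul_eq_mul] at h
  have h2 : Tl p q (α + n*(2*π)) - (α + n*(2*π)) = Tl p q α - α := h
  linarith

lemma Dl_pos (hp : 1 < ‖p‖) (hq : ‖q‖ < 1)
    (hne : ∀ α, Dl p q α ≠ 0) (α : ℝ) : 0 < Dl p q α := by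
  have hp' := ne_of_gt hp
  have hq' := ne_of_lt hq
  rcases lt_or_gt_of_ne (hne α) with hneg | hpos
  · exfalso
    by_cases hb : ∃ b, 0 < Dl p q b
    · obtain ⟨b, hb⟩ := hb
      have hmem : (0:ℝ) ∈ Set.uIcc (Dl p q α) (Dl p q b) :=
        Set.mem_uIcc.mpr (Or.inl ⟨le_of_lt hneg, le_of_lt hb⟩)
      have := intermediate_value_uIcc ((continuous_Dl hp' hq').continuousOn
        (s := Set.uIcc α b))
      obtain ⟨c, _, hc⟩ := this hmem
      exact hne c hc
    · push_neg at hb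
      have hdiff : Differentiable ℝ (Tl p q) := fun x => (hasDerivAt_Tl hp' hq' x).differentiableAt
      have hanti : Antitone (Tl p q) := by
        apply antitone_of_deriv_nonpos hdiff
        intro x
        rw [(hasDerivAt_Tl hp' hq' x).deriv]
        exact hb x
      have h1 : Tl p q (0 + 2*π) = Tl p q 0 + 2*π := Tl_add hp hq 0
      have h2 : Tl p q (0 + 2*π) ≤ Tl p q 0 := hanti (by positivity)
      have := Real.pi_pos
      linarith
  · exact hpos

lemma strictMono_Tl (hp : 1 < ‖p‖) (hq : ‖q‖ < 1)
    (hne : ∀ α, Dl p q α ≠ 0) : StrictMono (Tl p q) := by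
  apply strictMono_of_deriv_pos
  intro x
  rw [(hasDerivAt_Tl (ne_of_gt hp) (ne_of_lt hq) x).deriv]
  exact Dl_pos hp hq hne x

lemma mem_sphere_iff (z : ℂ) : z ∈ Metric.sphere (0:ℂ) 1 ↔ ‖z‖ = 1 := by
  simp [Complex.dist_eq]

lemma continuous_Tl {p q : ℂ} (hp : ‖p‖ ≠ 1) (hq : ‖q‖ ≠ 1) :
    Continuous (Tl p q) := by
  rw [continuous_iff_continuousAt]
  exact fun x => (hasDerivAt_Tl hp hq x).differentiableAt.continuousAt

lemma u_arg {z : ℂ} (hz : ‖z‖ = 1) : u z.arg = z := by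
  rw [u]
  conv_rhs => rw [← Complex.norm_mul_exp_arg_mul_I z]
  rw [hz]
  push_cast
  rw [one_mul, mul_comm]

end BlaschkeAux
end BlaschkeAuxSection

open BlaschkeAux in
/-- Let `B_{p,q}(z) = z·((z-p)/(1-p̄z))·((z-q)/(1-q̄z))` with `|p| > 1`, `|q| < 1`.
If `B_{p,q}` has no critical points on the unit circle, then its restriction to the
unit circle is an orientation-preserving homeomorphism of the circle onto itself:
it maps the circle bijectively to itself and admits a continuous strictly increasing
lift `T` with `B(e^{iα}) = e^{iT(α)}` and `T(α + 2π) = T(α) + 2π`. -/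
theorem blaschke_circle_homeomorphism (p q : ℂ) (hp : 1 < ‖p‖)
    (hq : ‖q‖ < 1)
    (hcrit : ∀ z : ℂ, ‖z‖ = 1 →
      deriv (fun z : ℂ => z * ((z - p) / (1 - (starRingEnd ℂ) p * z)) *
        ((z - q) / (1 - (starRingEnd ℂ) q * z))) z ≠ 0) :
    (∀ z : ℂ, ‖z‖ = 1 →
      ‖(z * ((z - p) / (1 - (starRingEnd ℂ) p * z)) *
        ((z - q) / (1 - (starRingEnd ℂ) q * z)))‖ = 1) ∧
    Set.BijOn (fun z : ℂ => z * ((z - p) / (1 - (starRingEnd ℂ) p * z)) *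
        ((z - q) / (1 - (starRingEnd ℂ) q * z)))
      (Metric.sphere (0:ℂ) 1) (Metric.sphere (0:ℂ) 1) ∧
    ∃ T : ℝ → ℝ, StrictMono T ∧ Continuous T ∧
      (∀ α : ℝ, Complex.exp (Complex.I * ↑α) *
          ((Complex.exp (Complex.I * ↑α) - p) /
            (1 - (starRingEnd ℂ) p * Complex.exp (Complex.I * ↑α))) *
          ((Complex.exp (Complex.I * ↑α) - q) /
            (1 - (starRingEnd ℂ) q * Complex.exp (Complex.I * ↑α))) =
        Complex.exp (Complex.I * ↑(T α))) ∧
      (∀ α : ℝ, T (α + 2 * Real.pi) = T α + 2 * Real.pi) := by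
  classical
  have hp1 : ‖p‖ ≠ 1 := ne_of_gt hp
  have hq1 : ‖q‖ ≠ 1 := ne_of_lt hq
  have habs : ∀ z : ℂ, ‖z‖ = 1 →
      ‖z * ((z - p) / (1 - (starRingEnd ℂ) p * z)) *
        ((z - q) / (1 - (starRingEnd ℂ) q * z))‖ = 1 := by
    intro z hz
    rw [norm_mul, norm_mul, hz, abs_ratio hp1 hz, abs_ratio hq1 hz]
    norm_num
  have hcrit' : ∀ z : ℂ, ‖z‖ = 1 → deriv (B p q) z ≠ 0 := hcrit
  have hne : ∀ α, Dl p q α ≠ 0 := fun α => Dl_ne hp1 hq1 hcrit' α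
  have hmono : StrictMono (Tl p q) := strictMono_Tl hp hq hne
  have hTcont : Continuous (Tl p q) := continuous_Tl hp1 hq1
  have hBeq : ∀ α : ℝ, B p q (u α) = Complex.exp (Complex.I * ((Tl p q α : ℝ) : ℂ)) :=
    B_eq hp1 hq1
  refine ⟨habs, ⟨?_, ?_, ?_⟩, Tl p q, hmono, hTcont, fun α => hBeq α, fun α => Tl_add hp hq α⟩
  · -- MapsTo
    intro z hz
    rw [mem_sphere_iff] at hz ⊢
    exact habs z hz
  · -- InjOn
    intro z1 h1 z2 h2 heq
    rw [mem_sphere_iff] at h1 h2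
    have e1 : u z1.arg = z1 := u_arg h1
    have e2 : u z2.arg = z2 := u_arg h2
    have hexp : Complex.exp (Complex.I * ((Tl p q z1.arg : ℝ) : ℂ)) =
        Complex.exp (Complex.I * ((Tl p q z2.arg : ℝ) : ℂ)) := by
      rw [← hBeq, ← hBeq, e1, e2]
      exact heq
    obtain ⟨n, hn⟩ := Complex.exp_eq_exp_iff_exists_int.mp hexp
    have him : Tl p q z1.arg = Tl p q z2.arg + n * (2*Real.pi) := by
      have := congrArg Complex.im hn
      simpa using this
    have harg : z1.arg = z2.arg + n * (2*Real.pi) := by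
      apply hmono.injective
      rw [Tl_int hp hq n z2.arg]
      exact him
    have b1l := Complex.neg_pi_lt_arg z1
    have b1u := Complex.arg_le_pi z1
    have b2l := Complex.neg_pi_lt_arg z2
    have b2u := Complex.arg_le_pi z2
    have hπ := Real.pi_pos
    have hn0 : n = 0 := by
      have hlt : (n:ℝ) < 1 := by nlinarith
      have hgt : (-1:ℝ) < n := by nlinarith
      have hlt' : n < 1 := by exact_mod_cast hlt
      have hgt' : -1 < n := by exact_mod_cast hgt
      omega
    rw [hn0] at harg
    push_cast at harg
    rw [← e1, ← e2]
    rw [harg]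
    norm_num
  · -- SurjOn
    intro z hz
    rw [mem_sphere_iff] at hz
    have e1 : u z.arg = z := u_arg hz
    set a := z.arg with ha
    have h2π : (0:ℝ) < 2*Real.pi := by positivity
    obtain ⟨n, hn⟩ := exists_nat_ge (|a - Tl p q 0| / (2*Real.pi))
    have hle : |a - Tl p q 0| ≤ (n:ℝ)*(2*Real.pi) := by
      rw [div_le_iff₀ h2π] at hn
      linarith
    have habs' := abs_le.mp hle
    have hub : a ≤ Tl p q ((n:ℝ)*(2*Real.pi)) := by
      have h := Tl_int hp hq (n:ℤ) 0
      rw [zero_add] at h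
      push_cast at h
      linarith [h]
    have hlb : Tl p q (-((n:ℝ)*(2*Real.pi))) ≤ a := by
      have h := Tl_int hp hq (-(n:ℤ)) 0
      rw [zero_add] at h
      push_cast at h
      rw [show -(n:ℝ)*(2*Real.pi) = -((n:ℝ)*(2*Real.pi)) by ring] at h
      linarith [h]
    have hmem : a ∈ Set.uIcc (Tl p q (-((n:ℝ)*(2*Real.pi)))) (Tl p q ((n:ℝ)*(2*Real.pi))) :=
      Set.mem_uIcc.mpr (Or.inl ⟨hlb, hub⟩)
    obtain ⟨c, _, hc⟩ := intermediate_value_uIcc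
      (hTcont.continuousOn (s := Set.uIcc (-((n:ℝ)*(2*Real.pi))) ((n:ℝ)*(2*Real.pi)))) hmem
    refine ⟨u c, (mem_sphere_iff _).mpr (abs_u c), ?_⟩
    show B p q (u c) = z
    rw [hBeq c, hc, ← e1]
    rfl
end

section
/- Define d_σ(x,y) = min{σ(Ī), σ(J̄)} where x ≠ y are points on the circle, I and J are the two open arcs of the circle determined by x and y, and σ is a Borel probability measure on the circle giving measure zero to points. Then d_σ satisfies the triangle inequality: d_σ(x,z) ≤ d_σ(x,y) + d_σ(y,z) for all distinct x, y, z. -/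
open Set MeasureTheory

/-- The closed arc of the circle `ℝ/ℤ` from `x` to `y`, traversed in the positive
direction: the image of `[0, d]` under `t ↦ x + t`, where `d ∈ (0,1]` is the
representative of `y - x`.  For `x ≠ y`, `closedArc x y` and `closedArc y x` are the
closures of the two open arcs determined by `x` and `y`. -/
noncomputable def closedArc (x y : AddCircle (1:ℝ)) : Set (AddCircle (1:ℝ)) :=
  letI : Fact ((0:ℝ) < 1) := ⟨one_pos⟩
  (fun t : ℝ => x + (t : AddCircle (1:ℝ))) ''
    Set.Icc 0 ((AddCircle.equivIoc (1:ℝ) 0 (y - x) : Set.Ioc (0:ℝ) (0 + 1)) : ℝ)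


local instance : Fact ((0:ℝ) < 1) := ⟨one_pos⟩

noncomputable def ell (v : AddCircle (1:ℝ)) : ℝ :=
  ((AddCircle.equivIoc (1:ℝ) 0 v : Set.Ioc (0:ℝ) (0+1)) : ℝ)

lemma ell_mem (v : AddCircle (1:ℝ)) : ell v ∈ Set.Ioc (0:ℝ) 1 := by
  have := (AddCircle.equivIoc (1:ℝ) 0 v).2
  simpa [ell] using this

lemma coe_ell (v : AddCircle (1:ℝ)) : ((ell v : ℝ) : AddCircle (1:ℝ)) = v := by
  exact (AddCircle.equivIoc (1:ℝ) 0).symm_apply_apply v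

lemma ell_coe {s : ℝ} (hs : s ∈ Set.Ioc (0:ℝ) 1) : ell ((s : ℝ) : AddCircle (1:ℝ)) = s := by
  have hs' : s ∈ Set.Ioc (0:ℝ) (0+1) := by simpa using hs
  have : (AddCircle.equivIoc (1:ℝ) 0) ((s : ℝ) : AddCircle (1:ℝ)) = ⟨s, hs'⟩ := by
    rw [Equiv.apply_eq_iff_eq_symm_apply]
    rfl
  simp [ell, this]

lemma coe_one_circ : ((1 : ℝ) : AddCircle (1:ℝ)) = 0 := by
  simp [AddCircle.coe_eq_zero_iff]

lemma ell_lt_one {v : AddCircle (1:ℝ)} (hv : v ≠ 0) : ell v < 1 := by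
  rcases lt_or_eq_of_le (ell_mem v).2 with h | h
  · exact h
  · exfalso; apply hv
    rw [← coe_ell v, h, coe_one_circ]

lemma ell_neg {v : AddCircle (1:ℝ)} (hv : v ≠ 0) : ell (-v) = 1 - ell v := by
  have h1 := (ell_mem v).1
  have h2 := ell_lt_one hv
  have : ((1 - ell v : ℝ) : AddCircle (1:ℝ)) = -v := by
    rw [QuotientAddGroup.mk_sub, coe_one_circ, coe_ell]
    abel
  rw [← this, ell_coe ⟨by linarith, by linarith⟩]

lemma mem_closedArc_iff {x y u : AddCircle (1:ℝ)} :
    u ∈ closedArc x y ↔ u = x ∨ ell (u - x) ≤ ell (y - x) := by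
  constructor
  · rintro ⟨t, ht, rfl⟩
    rcases eq_or_lt_of_le ht.1 with h | h
    · left; simp [← h]
    · rcases lt_or_eq_of_le (le_trans ht.2 (by exact (ell_mem (y-x)).2 : (_:ℝ) ≤ 1)) with h1 | h1
      · right
        have : x + (t:AddCircle (1:ℝ)) - x = ((t:ℝ):AddCircle (1:ℝ)) := add_sub_cancel_left x _
        rw [this, ell_coe ⟨h, le_of_lt h1⟩]
        exact ht.2
      · left
        show x + ((t:ℝ):AddCircle (1:ℝ)) = x
        rw [h1, coe_one_circ, add_zero]
  · rintro (rfl | h)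
    · exact ⟨0, ⟨le_refl _, le_of_lt (ell_mem _).1⟩, by simp⟩
    · refine ⟨ell (u - x), ⟨le_of_lt (ell_mem _).1, h⟩, ?_⟩
      show x + ((ell (u - x) : ℝ) : AddCircle (1:ℝ)) = u
      rw [coe_ell, add_sub_cancel]

lemma arc_mono {x y y' : AddCircle (1:ℝ)} (h : ell (y' - x) ≤ ell (y - x)) :
    closedArc x y' ⊆ closedArc x y := by
  intro u hu
  rw [mem_closedArc_iff] at hu ⊢
  exact hu.imp id (fun h' => le_trans h' h)

lemma sub_ne_zero_of_ne' {a b : AddCircle (1:ℝ)} (h : a ≠ b) : b - a ≠ 0 :=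
  sub_ne_zero.mpr h.symm

lemma ell_dichotomy {x y z : AddCircle (1:ℝ)} (hxy : x ≠ y) (hyz : y ≠ z) (hxz : x ≠ z) :
    ell (z - x) = ell (y - x) + ell (z - y) ∨
    ell (x - z) = ell (y - z) + ell (x - y) := by
  set p := ell (y - x) with hp
  set q := ell (z - y) with hq
  set r := ell (z - x) with hr
  have hpm := ell_mem (y - x); have hqm := ell_mem (z - y); have hrm := ell_mem (z - x)
  have hp1 : p < 1 := ell_lt_one (sub_ne_zero_of_ne' hxy)
  have hq1 : q < 1 := ell_lt_one (sub_ne_zero_of_ne' hyz)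
  have hr1 : r < 1 := ell_lt_one (sub_ne_zero_of_ne' hxz)
  have hcoe : ((p + q : ℝ) : AddCircle (1:ℝ)) = ((r : ℝ) : AddCircle (1:ℝ)) := by
    rw [QuotientAddGroup.mk_add, coe_ell, coe_ell, coe_ell]
    abel
  have hint : ∃ n : ℤ, p + q - r = n := by
    have := (QuotientAddGroup.eq_iff_sub_mem).mp hcoe
    rcases AddSubgroup.mem_zmultiples_iff.mp this with ⟨n, hn⟩
    exact ⟨n, by rw [← hn]; simp⟩
  rcases hint with ⟨n, hn⟩
  have hn0 : n = 0 ∨ n = 1 := by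
    have h1 : (-1 : ℝ) < n := by rw [← hn]; linarith [hpm.1, hqm.1, hrm.2]
    have h2 : (n : ℝ) < 2 := by rw [← hn]; linarith [hpm.2, hqm.2, hrm.1]
    have h1' : (-1 : ℤ) < n := by exact_mod_cast h1
    have h2' : n < 2 := by exact_mod_cast h2
    omega
  rcases hn0 with rfl | rfl
  · left; simp at hn; linarith
  · right
    rw [show x - z = -(z - x) from (neg_sub z x).symm, ell_neg (sub_ne_zero_of_ne' hxz),
        show y - z = -(z - y) from (neg_sub z y).symm, ell_neg (sub_ne_zero_of_ne' hyz),
        show x - y = -(y - x) from (neg_sub y x).symm, ell_neg (sub_ne_zero_of_ne' hxy)]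
    simp at hn
    linarith

lemma arc_split {x y z : AddCircle (1:ℝ)} (hxy : x ≠ y) (hyz : y ≠ z) (hxz : x ≠ z)
    (h : ell (z - x) = ell (y - x) + ell (z - y)) :
    closedArc x z ⊆ closedArc x y ∪ closedArc y z ∧
    closedArc z x ⊆ closedArc y x ∧ closedArc z x ⊆ closedArc z y := by
  have hpm := ell_mem (y - x); have hqm := ell_mem (z - y); have hrm := ell_mem (z - x)
  have hp1 : ell (y - x) < 1 := ell_lt_one (sub_ne_zero_of_ne' hxy)
  have hq1 : ell (z - y) < 1 := ell_lt_one (sub_ne_zero_of_ne' hyz)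
  have hr1 : ell (z - x) < 1 := ell_lt_one (sub_ne_zero_of_ne' hxz)
  refine ⟨?_, ?_, ?_⟩
  · intro u hu
    rw [mem_closedArc_iff] at hu
    rcases hu with rfl | hu
    · exact Or.inl (mem_closedArc_iff.mpr (Or.inl rfl))
    · by_cases hcase : ell (u - x) ≤ ell (y - x)
      · exact Or.inl (mem_closedArc_iff.mpr (Or.inr hcase))
      · push_neg at hcase
        right
        rw [mem_closedArc_iff]
        right
        have hmem := ell_mem (u - x)
        have key : ell (u - y) = ell (u - x) - ell (y - x) := by
          have hco : ((ell (u - x) - ell (y - x) : ℝ) : AddCircle (1:ℝ)) = u - y := by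
            rw [QuotientAddGroup.mk_sub, coe_ell, coe_ell]
            abel
          rw [← hco, ell_coe ⟨by linarith, by linarith [hmem.2]⟩]
        rw [key]
        linarith
  · intro u hu
    rw [mem_closedArc_iff] at hu ⊢
    have exy : ell (x - y) = 1 - ell (y - x) := by
      rw [show x - y = -(y - x) from (neg_sub y x).symm, ell_neg (sub_ne_zero_of_ne' hxy)]
    have exz : ell (x - z) = 1 - ell (z - x) := by
      rw [show x - z = -(z - x) from (neg_sub z x).symm, ell_neg (sub_ne_zero_of_ne' hxz)]
    rcases hu with h' | hu
    · right
      rw [exy, h']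
      linarith [hpm.1]
    · right
      rw [exy]
      rw [exz] at hu
      have hmem := ell_mem (u - z)
      have key : ell (u - y) = ell (u - z) + ell (z - y) := by
        have hco : ((ell (u - z) + ell (z - y) : ℝ) : AddCircle (1:ℝ)) = u - y := by
          rw [QuotientAddGroup.mk_add, coe_ell, coe_ell]
          abel
        rw [← hco, ell_coe ⟨by linarith [hmem.1, hqm.1], by linarith [hmem.1, hpm.1]⟩]
      rw [key]
      linarith
  · apply arc_mono
    rw [show x - z = -(z - x) from (neg_sub z x).symm, ell_neg (sub_ne_zero_of_ne' hxz),
        show y - z = -(z - y) from (neg_sub z y).symm, ell_neg (sub_ne_zero_of_ne' hyz)]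
    linarith [hpm.1]

lemma min_triangle_aux {A A' B B' C C' : ENNReal} (h1 : A ≤ B + C) (h2 : A' ≤ B') (h3 : A' ≤ C') :
    min A A' ≤ min B B' + min C C' := by
  rcases le_total B B' with hb | hb <;> rcases le_total C C' with hc | hc
  · calc min A A' ≤ A := min_le_left _ _
      _ ≤ B + C := h1
      _ = min B B' + min C C' := by rw [min_eq_left hb, min_eq_left hc]
  · calc min A A' ≤ A' := min_le_right _ _
      _ ≤ C' := h3
      _ ≤ min B B' + C' := le_add_self
      _ = min B B' + min C C' := by rw [min_eq_right hc]
  · calc min A A' ≤ A' := min_le_right _ _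
      _ ≤ B' := h2
      _ ≤ B' + min C C' := le_self_add
      _ = min B B' + min C C' := by rw [min_eq_right hb]
  · calc min A A' ≤ A' := min_le_right _ _
      _ ≤ B' := h2
      _ ≤ B' + min C C' := le_self_add
      _ = min B B' + min C C' := by rw [min_eq_right hb]

/-- For a nonatomic Borel probability measure `σ` on the circle,
`d_σ(x,y) = min(σ(Ī), σ(J̄))` (where `I, J` are the two open arcs determined by `x ≠ y`)
satisfies the triangle inequality. -/
theorem d_sigma_triangle (σ : Measure (AddCircle (1:ℝ))) [IsProbabilityMeasure σ]
    (hna : ∀ x : AddCircle (1:ℝ), σ {x} = 0)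
    (x y z : AddCircle (1:ℝ)) (hxy : x ≠ y) (hyz : y ≠ z) (hxz : x ≠ z) :
    min (σ (closedArc x z)) (σ (closedArc z x)) ≤
      min (σ (closedArc x y)) (σ (closedArc y x)) +
        min (σ (closedArc y z)) (σ (closedArc z y)) := by

  rcases ell_dichotomy hxy hyz hxz with h | h
  · obtain ⟨h1, h2, h3⟩ := arc_split hxy hyz hxz h
    exact min_triangle_aux
      (le_trans (measure_mono h1) (measure_union_le _ _))
      (measure_mono h2) (measure_mono h3)
  · obtain ⟨h1, h2, h3⟩ := arc_split hyz.symm hxy.symm hxz.symm h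
    rw [min_comm (σ (closedArc x z)), min_comm (σ (closedArc x y)),
      min_comm (σ (closedArc y z)), add_comm]
    exact min_triangle_aux
      (le_trans (measure_mono h1) (measure_union_le _ _))
      (measure_mono h2) (measure_mono h3)
end

section
/- Let λ = e^{2πiθ} and let g_c(z) = (-λ(1+c)^2 z^2 + 2λ c(1+c) z)/(-4c z + 2c(1+c)). Then for every z ∈ ℂ, g_c(z) → λz - (λ/2)z^2 as c → ∞, uniformly on compact subsets of ℂ. -/
open Complex

/-- With `λ = e^{2πiθ}` and
`g_c(z) = (-λ(1+c)² z² + 2λc(1+c) z)/(-4cz + 2c(1+c))`, one has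
`g_c(z) → λz - (λ/2)z²` as `c → ∞`, uniformly on compact subsets of `ℂ`. -/
theorem quadratic_family_limit_at_infinity (θ : ℝ) :
    ∀ K : Set ℂ, IsCompact K → ∀ ε : ℝ, 0 < ε → ∃ R : ℝ,
      ∀ c : ℂ, R < ‖c‖ → ∀ z ∈ K,
        ‖
          ((-Complex.exp (2 * ↑Real.pi * Complex.I * ↑θ) * (1 + c) ^ 2 * z ^ 2 +
              2 * Complex.exp (2 * ↑Real.pi * Complex.I * ↑θ) * c * (1 + c) * z) /
            (-4 * c * z + 2 * c * (1 + c)) -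
          (Complex.exp (2 * ↑Real.pi * Complex.I * ↑θ) * z -
            Complex.exp (2 * ↑Real.pi * Complex.I * ↑θ) / 2 * z ^ 2))‖ < ε := by
  intro K hK ε hε
  obtain ⟨r, hr⟩ := hK.isBounded.subset_closedBall 0
  set M : ℝ := max r 0 with hM
  have hM0 : (0 : ℝ) ≤ M := le_max_right r 0
  have hzM : ∀ z ∈ K, ‖z‖ ≤ M := by
    intro z hz
    have h := hr hz
    simp only [Metric.mem_closedBall, Complex.dist_eq, sub_zero] at h
    exact h.trans (le_max_left r 0)
  set lam := Complex.exp (2 * ↑Real.pi * Complex.I * ↑θ) with hlamdef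
  have hlam : ‖lam‖ = 1 := by
    rw [hlamdef, Complex.norm_exp]
    have : (2 * ↑Real.pi * Complex.I * ↑θ).re = 0 := by
      simp [Complex.mul_re, Complex.mul_im]
    rw [this, Real.exp_zero]
  refine ⟨max (2 + 4 * M) ((4 + 2 * M) * M ^ 2 / ε + 1), ?_⟩
  intro c hc z hz
  have hzM' := hzM z hz
  have hz0 : (0 : ℝ) ≤ ‖z‖ := norm_nonneg z
  have hc1 : (2 : ℝ) + 4 * M < ‖c‖ := lt_of_le_of_lt (le_max_left _ _) hc
  have hc2 : (4 + 2 * M) * M ^ 2 / ε + 1 < ‖c‖ :=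
    lt_of_le_of_lt (le_max_right _ _) hc
  have hca : (0 : ℝ) < ‖c‖ := by nlinarith
  have hc0 : c ≠ 0 := by
    intro h; rw [h] at hca; simp at hca
  -- lower bound on the denominator factor
  have key : ‖c‖ ≤ ‖1 + c - 2 * z‖ + (1 + 2 * M) := by
    have h1 : c = (1 + c - 2 * z) + (2 * z - 1) := by ring
    calc ‖c‖ = ‖(1 + c - 2 * z) + (2 * z - 1)‖ := by rw [← h1]
      _ ≤ ‖1 + c - 2 * z‖ + ‖2 * z - 1‖ :=
          norm_add_le _ _
      _ ≤ ‖1 + c - 2 * z‖ + (1 + 2 * M) := by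
          have h2 : ‖2 * z - 1‖ ≤ ‖2 * z‖ + ‖(1 : ℂ)‖ :=
            norm_sub_le _ _
          simp only [norm_mul, Complex.norm_two, norm_one] at h2
          linarith
  have hd2 : ‖c‖ / 2 < ‖1 + c - 2 * z‖ := by linarith
  have hden : (1 + c - 2 * z) ≠ 0 := by
    intro h
    rw [h] at hd2
    simp at hd2
    linarith
  -- algebraic identity
  have h4 : (-4 * c * z + 2 * c * (1 + c)) ≠ 0 := by
    have he : -4 * c * z + 2 * c * (1 + c) = 2 * c * (1 + c - 2 * z) := by ring
    rw [he]
    exact mul_ne_zero (mul_ne_zero two_ne_zero hc0) hden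
  have heq :
      (-lam * (1 + c) ^ 2 * z ^ 2 + 2 * lam * c * (1 + c) * z) /
          (-4 * c * z + 2 * c * (1 + c)) - (lam * z - lam / 2 * z ^ 2)
        = lam * z ^ 2 * (c * (3 - 2 * z) - 1) / (2 * c * (1 + c - 2 * z)) := by
    have h5 : (2 * c * (1 + c - 2 * z)) ≠ 0 :=
      mul_ne_zero (mul_ne_zero two_ne_zero hc0) hden
    rw [eq_div_iff h5, sub_mul, div_mul_eq_mul_div, sub_eq_iff_eq_add,
      div_eq_iff h4]
    ring
  rw [heq]
  simp only [norm_div, norm_mul, norm_pow, hlam, Complex.norm_two, one_mul]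
  -- numerator bound
  have hnum : ‖c * (3 - 2 * z) - 1‖ ≤ ‖c‖ * (4 + 2 * M) := by
    have h1 : ‖c * (3 - 2 * z) - 1‖ ≤
        ‖c * (3 - 2 * z)‖ + ‖(1 : ℂ)‖ := norm_sub_le _ _
    have h2 : ‖3 - 2 * z‖ ≤ 3 + 2 * M := by
      have := norm_sub_le (3 : ℂ) (2 * z)
      simp only [norm_mul, Complex.norm_two] at this
      have h3 : ‖(3 : ℂ)‖ = 3 := by
        rw [show ((3 : ℂ)) = ((3 : ℝ) : ℂ) by norm_num, Complex.norm_real]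
        norm_num
      rw [h3] at this
      linarith
    rw [norm_mul, norm_one] at h1
    nlinarith [norm_nonneg (3 - 2 * z)]
  have habspos : (0 : ℝ) < ‖1 + c - 2 * z‖ := norm_pos_iff.mpr hden
  have hdpos : (0 : ℝ) < 2 * ‖c‖ * ‖1 + c - 2 * z‖ := by
    positivity
  rw [div_lt_iff₀ hdpos]
  have hM2 : ‖z‖ ^ 2 ≤ M ^ 2 := by nlinarith
  have hεa : (4 + 2 * M) * M ^ 2 < ε * ‖c‖ := by
    have := (div_lt_iff₀ hε).mp (by linarith : (4 + 2 * M) * M ^ 2 / ε < ‖c‖)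
    linarith [mul_comm ε (‖c‖)]
  have hfin1 : ‖z‖ ^ 2 * ‖c * (3 - 2 * z) - 1‖ ≤
      M ^ 2 * (‖c‖ * (4 + 2 * M)) :=
    mul_le_mul hM2 hnum (norm_nonneg _) (by positivity)
  have hfin2 := mul_lt_mul_of_pos_left hεa hca
  have hfin3 : ε * ‖c‖ * ‖c‖ ≤
      ε * (2 * ‖c‖ * ‖1 + c - 2 * z‖) := by
    nlinarith [mul_le_mul_of_nonneg_left hd2.le
      (by positivity : (0:ℝ) ≤ 2 * ε * ‖c‖)]
  nlinarith [hfin1, hfin2, hfin3]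
end
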